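/- Let n ≥ 1, x_t, x_s, β ∈ ℝⁿ, α ∈ ℝ, z_t, z_s > 0, σ_t, σ_s > 0, ρ ∈ (−1, 1), and σ_{t,s} = ρσ_tσ_s. Let (U_t, U_s) have the bivariate normal distribution with means x_t'β + z_t·α and x_s'β + z_s·α, standard deviations σ_t and σ_s, and correlation ρ. Then E[(U_t²z_s²·U_s·z_t − U_s²z_t²·U_t·z_s − U_t z_s·U_s z_t·(x_t z_s − x_s z_t)'β + U_t z_s·(z_t²σ_s² − z_t z_s σ_{t,s}) − U_s z_t·(z_s²σ_t² − z_t z_s σ_{t,s}))·1{U_t>0, U_s>0}] = 0. -/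

import Mathlib

open MeasureTheory

/-- Density of the nondegenerate bivariate normal distribution with means `μ₁, μ₂`,
standard deviations `σ₁, σ₂ > 0` and correlation `ρ ∈ (−1, 1)`. -/
noncomputable def binormalPDF (μ₁ μ₂ σ₁ σ₂ ρ u₁ u₂ : ℝ) : ℝ :=
  (1 / (2 * Real.pi * σ₁ * σ₂ * Real.sqrt (1 - ρ ^ 2))) *
    Real.exp (-(1 / (2 * (1 - ρ ^ 2))) *
      ((u₁ - μ₁) ^ 2 / σ₁ ^ 2 - 2 * ρ * (u₁ - μ₁) * (u₂ - μ₂) / (σ₁ * σ₂)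
        + (u₂ - μ₂) ^ 2 / σ₂ ^ 2))

/-!
Write `f` for the bivariate normal density and `Q = (0, ∞)²`. The function `u₁ u₂ f` vanishes on
the boundary of `Q` and has Gaussian decay, so both of its partial derivatives integrate to zero
over `Q` (Fubini, then the fundamental theorem of calculus on a half-line). The score identity
`(u - μ) f = -Σ ∇f` makes the moment function times `f` equal, pointwise, to
`z_s z_t ((z_t σ_{t,s} - z_s σ_t²) ∂₁(u₁ u₂ f) + (z_t σ_s² - z_s σ_{t,s}) ∂₂(u₁ u₂ f))`;
the fixed effect `α` cancels in the mean difference `z_s m_t - z_t m_s`. Only `∂₂` needs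
treatment, since swapping the coordinates together with the parameters leaves `f` unchanged.
-/

open Real Set Filter

theorem integral_Ioi_eq_neg_of_hasDerivAt_of_integrableOn {E : Type*} [NormedAddCommGroup E]
    [NormedSpace ℝ E] [CompleteSpace E] {f f' : ℝ → E} {a : ℝ}
    (hderiv : ∀ x ∈ Ici a, HasDerivAt f (f' x) x) (f'int : IntegrableOn f' (Ioi a))
    (fint : IntegrableOn f (Ioi a)) :
    ∫ x in Ioi a, f' x = -f a := by
  have hlim := tendsto_zero_of_hasDerivAt_of_integrableOn_Ioi
    (fun x hx => hderiv x (mem_Ici_of_Ioi hx)) f'int fint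
  rw [integral_Ioi_of_hasDerivAt_of_tendsto' hderiv f'int hlim, zero_sub]

theorem setIntegral_Ioi_prod_Ioi_eq_zero_of_hasDerivAt_snd {E : Type*} [NormedAddCommGroup E]
    [NormedSpace ℝ E] [CompleteSpace E] {F F' : ℝ → ℝ → E}
    (hF₀ : ∀ x ∈ Ioi (0 : ℝ), F x 0 = 0)
    (hderiv : ∀ x ∈ Ioi (0 : ℝ), ∀ y ∈ Ici (0 : ℝ), HasDerivAt (F x) (F' x y) y)
    (hF : ∀ x ∈ Ioi (0 : ℝ), IntegrableOn (F x) (Ioi 0))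
    (hF'slice : ∀ x ∈ Ioi (0 : ℝ), IntegrableOn (F' x) (Ioi 0))
    (hF' : IntegrableOn (Function.uncurry F') (Ioi 0 ×ˢ Ioi 0)) :
    ∫ p in Ioi (0 : ℝ) ×ˢ Ioi (0 : ℝ), F' p.1 p.2 = 0 := by
  rw [Measure.volume_eq_prod] at hF' ⊢
  refine (setIntegral_prod (Function.uncurry F') hF').trans ?_
  refine (setIntegral_congr_fun measurableSet_Ioi fun x hx => ?_).trans (integral_zero _ _)
  calc ∫ y in Ioi 0, F' x y = -F x 0 :=
        integral_Ioi_eq_neg_of_hasDerivAt_of_integrableOn (hderiv x hx) (hF'slice x hx) (hF x hx)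
    _ = 0 := by rw [hF₀ x hx, neg_zero]

theorem integrable_pow_mul_exp_neg_mul_sq_sub {b : ℝ} (hb : 0 < b) (m : ℕ) (c : ℝ) :
    Integrable fun x : ℝ => x ^ m * exp (-b * (x - c) ^ 2) := by
  have hcentered : Integrable fun x : ℝ => (x + c) ^ m * exp (-b * x ^ 2) := by
    simp_rw [add_pow, Finset.sum_mul]
    refine integrable_finsetSum _ fun k _ => ?_
    have hk := (integrable_rpow_mul_exp_neg_mul_sq hb (s := k)
      (neg_one_lt_zero.trans_le k.cast_nonneg)).mul_const
      (c ^ (m - k) * m.choose k)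
    refine hk.congr (Eventually.of_forall fun x => ?_)
    simp only [rpow_natCast]
    ring
  simpa using hcentered.comp_sub_right c

section Binormal

variable {μ₁ μ₂ σ₁ σ₂ ρ : ℝ}

theorem binormalPDF_swap (μ₁ μ₂ σ₁ σ₂ ρ u₁ u₂ : ℝ) :
    binormalPDF μ₂ μ₁ σ₂ σ₁ ρ u₂ u₁ = binormalPDF μ₁ μ₂ σ₁ σ₂ ρ u₁ u₂ := by
  unfold binormalPDF
  ring_nf

theorem continuous_binormalPDF :
    Continuous fun p : ℝ × ℝ => binormalPDF μ₁ μ₂ σ₁ σ₂ ρ p.1 p.2 := by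
  unfold binormalPDF
  fun_prop

theorem binormalPDF_nonneg (hσ₁ : 0 < σ₁) (hσ₂ : 0 < σ₂) (u₁ u₂ : ℝ) :
    0 ≤ binormalPDF μ₁ μ₂ σ₁ σ₂ ρ u₁ u₂ := by
  unfold binormalPDF
  positivity

theorem exists_binormalPDF_le_mul_exp (hσ₁ : 0 < σ₁) (hσ₂ : 0 < σ₂) (hρ : ρ ∈ Ioo (-1 : ℝ) 1) :
    ∃ C b₁ b₂ : ℝ, 0 ≤ C ∧ 0 < b₁ ∧ 0 < b₂ ∧ ∀ u₁ u₂,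
      binormalPDF μ₁ μ₂ σ₁ σ₂ ρ u₁ u₂
        ≤ C * (exp (-b₁ * (u₁ - μ₁) ^ 2) * exp (-b₂ * (u₂ - μ₂) ^ 2)) := by
  have hρ' : |ρ| < 1 := abs_lt.mpr hρ
  have hρ2 : 0 < 1 - ρ ^ 2 := by nlinarith [hρ.1, hρ.2]
  refine ⟨1 / (2 * π * σ₁ * σ₂ * √(1 - ρ ^ 2)), (1 - |ρ|) / (2 * (1 - ρ ^ 2) * σ₁ ^ 2),
    (1 - |ρ|) / (2 * (1 - ρ ^ 2) * σ₂ ^ 2), by positivity,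
    div_pos (by linarith) (by positivity), div_pos (by linarith) (by positivity), fun u₁ u₂ => ?_⟩
  unfold binormalPDF
  rw [← exp_add]
  gcongr
  set a := (u₁ - μ₁) / σ₁
  set b := (u₂ - μ₂) / σ₂
  -- the cross term is dominated by the squares: `2ρab ≤ |ρ|(a² + b²)`
  have hcross : 0 ≤ |ρ| * a ^ 2 + |ρ| * b ^ 2 - 2 * ρ * a * b := by
    rcases abs_cases ρ with ⟨h, _⟩ | ⟨h, _⟩ <;> rw [h] <;>
      nlinarith [sq_nonneg (a - b), sq_nonneg (a + b)]
  have hgap : (-((1 - |ρ|) / (2 * (1 - ρ ^ 2) * σ₁ ^ 2)) * (u₁ - μ₁) ^ 2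
        + -((1 - |ρ|) / (2 * (1 - ρ ^ 2) * σ₂ ^ 2)) * (u₂ - μ₂) ^ 2)
      - -(1 / (2 * (1 - ρ ^ 2))) * ((u₁ - μ₁) ^ 2 / σ₁ ^ 2
          - 2 * ρ * (u₁ - μ₁) * (u₂ - μ₂) / (σ₁ * σ₂) + (u₂ - μ₂) ^ 2 / σ₂ ^ 2)
      = (|ρ| * a ^ 2 + |ρ| * b ^ 2 - 2 * ρ * a * b) / (2 * (1 - ρ ^ 2)) := by
    simp only [a, b]
    field_simp
    ring
  linarith [div_nonneg hcross (by positivity : (0 : ℝ) ≤ 2 * (1 - ρ ^ 2))]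

theorem integrable_monomial_mul_binormalPDF (hσ₁ : 0 < σ₁) (hσ₂ : 0 < σ₂)
    (hρ : ρ ∈ Ioo (-1 : ℝ) 1) (i j : ℕ) :
    Integrable fun p : ℝ × ℝ => p.1 ^ i * p.2 ^ j * binormalPDF μ₁ μ₂ σ₁ σ₂ ρ p.1 p.2 := by
  obtain ⟨C, b₁, b₂, hC, hb₁, hb₂, hle⟩ :=
    exists_binormalPDF_le_mul_exp (μ₁ := μ₁) (μ₂ := μ₂) hσ₁ hσ₂ hρ
  have hdom := (((integrable_pow_mul_exp_neg_mul_sq_sub hb₁ i μ₁).const_mul C).mul_prod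
    (integrable_pow_mul_exp_neg_mul_sq_sub hb₂ j μ₂)).norm
  rw [← Measure.volume_eq_prod] at hdom
  refine hdom.mono' (((continuous_fst.pow i).mul (continuous_snd.pow j)).mul
    continuous_binormalPDF).aestronglyMeasurable (Eventually.of_forall fun p => ?_)
  have hf := binormalPDF_nonneg (μ₁ := μ₁) (μ₂ := μ₂) (ρ := ρ) hσ₁ hσ₂ p.1 p.2
  simp only [norm_mul, norm_pow, Real.norm_eq_abs, abs_of_nonneg hf, abs_of_nonneg hC,
    abs_of_pos (exp_pos _)]
  calc |p.1| ^ i * |p.2| ^ j * binormalPDF μ₁ μ₂ σ₁ σ₂ ρ p.1 p.2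
      ≤ |p.1| ^ i * |p.2| ^ j
          * (C * (exp (-b₁ * (p.1 - μ₁) ^ 2) * exp (-b₂ * (p.2 - μ₂) ^ 2))) := by
        gcongr
        exact hle p.1 p.2
    _ = _ := by ring

theorem integrable_pow_mul_binormalPDF_snd (hσ₁ : 0 < σ₁) (hσ₂ : 0 < σ₂)
    (hρ : ρ ∈ Ioo (-1 : ℝ) 1) (j : ℕ) (u₁ : ℝ) :
    Integrable fun u₂ => u₂ ^ j * binormalPDF μ₁ μ₂ σ₁ σ₂ ρ u₁ u₂ := by
  obtain ⟨C, b₁, b₂, hC, hb₁, hb₂, hle⟩ :=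
    exists_binormalPDF_le_mul_exp (μ₁ := μ₁) (μ₂ := μ₂) hσ₁ hσ₂ hρ
  have hdom := ((integrable_pow_mul_exp_neg_mul_sq_sub hb₂ j μ₂).const_mul
    (C * exp (-b₁ * (u₁ - μ₁) ^ 2))).norm
  refine hdom.mono' ((continuous_pow j).mul (continuous_binormalPDF.comp
    (continuous_const.prodMk continuous_id))).aestronglyMeasurable
    (Eventually.of_forall fun u₂ => ?_)
  have hf := binormalPDF_nonneg (μ₁ := μ₁) (μ₂ := μ₂) (ρ := ρ) hσ₁ hσ₂ u₁ u₂
  simp only [norm_mul, norm_pow, Real.norm_eq_abs, abs_of_nonneg hf, abs_of_nonneg hC,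
    abs_of_pos (exp_pos _)]
  calc |u₂| ^ j * binormalPDF μ₁ μ₂ σ₁ σ₂ ρ u₁ u₂
      ≤ |u₂| ^ j * (C * (exp (-b₁ * (u₁ - μ₁) ^ 2) * exp (-b₂ * (u₂ - μ₂) ^ 2))) := by
        gcongr
        exact hle u₁ u₂
    _ = _ := by ring

theorem hasDerivAt_binormalPDF_snd (μ₁ μ₂ σ₁ σ₂ ρ u₁ u₂ : ℝ) :
    HasDerivAt (binormalPDF μ₁ μ₂ σ₁ σ₂ ρ u₁)
      ((ρ * (u₁ - μ₁) / (σ₁ * σ₂) - (u₂ - μ₂) / σ₂ ^ 2) / (1 - ρ ^ 2)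
        * binormalPDF μ₁ μ₂ σ₁ σ₂ ρ u₁ u₂) u₂ := by
  have hc := (hasDerivAt_id u₂).sub_const μ₂
  have hQ := ((hasDerivAt_const u₂ ((u₁ - μ₁) ^ 2 / σ₁ ^ 2)).sub
    ((hc.const_mul (2 * ρ * (u₁ - μ₁))).div_const (σ₁ * σ₂))).add ((hc.pow 2).div_const (σ₂ ^ 2))
  refine (((hQ.const_mul (-(1 / (2 * (1 - ρ ^ 2))))).exp).const_mul
    (1 / (2 * π * σ₁ * σ₂ * √(1 - ρ ^ 2)))).congr_deriv ?_
  simp only [binormalPDF, id, Pi.add_apply, Pi.sub_apply, Pi.pow_apply]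
  generalize 1 - ρ ^ 2 = κ
  ring

noncomputable def derivSndMulBinormalPDF (μ₁ μ₂ σ₁ σ₂ ρ u₁ u₂ : ℝ) : ℝ :=
  (u₁ + u₁ * u₂ * ((ρ * (u₁ - μ₁) / (σ₁ * σ₂) - (u₂ - μ₂) / σ₂ ^ 2) / (1 - ρ ^ 2)))
    * binormalPDF μ₁ μ₂ σ₁ σ₂ ρ u₁ u₂

theorem hasDerivAt_mul_binormalPDF_snd (μ₁ μ₂ σ₁ σ₂ ρ u₁ u₂ : ℝ) :
    HasDerivAt (fun u₂ => u₁ * u₂ * binormalPDF μ₁ μ₂ σ₁ σ₂ ρ u₁ u₂)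
      (derivSndMulBinormalPDF μ₁ μ₂ σ₁ σ₂ ρ u₁ u₂) u₂ := by
  refine (((hasDerivAt_id u₂).const_mul u₁).mul
    (hasDerivAt_binormalPDF_snd μ₁ μ₂ σ₁ σ₂ ρ u₁ u₂)).congr_deriv ?_
  simp only [derivSndMulBinormalPDF, id]
  ring

theorem integrable_derivSndMulBinormalPDF (hσ₁ : 0 < σ₁) (hσ₂ : 0 < σ₂)
    (hρ : ρ ∈ Ioo (-1 : ℝ) 1) :
    Integrable fun p : ℝ × ℝ => derivSndMulBinormalPDF μ₁ μ₂ σ₁ σ₂ ρ p.1 p.2 := by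
  have h := integrable_monomial_mul_binormalPDF (μ₁ := μ₁) (μ₂ := μ₂) hσ₁ hσ₂ hρ
  refine ((h 1 0).add (((h 2 1).const_mul (ρ / (σ₁ * σ₂) / (1 - ρ ^ 2))).add
    (((h 1 1).const_mul ((μ₂ / σ₂ ^ 2 - ρ * μ₁ / (σ₁ * σ₂)) / (1 - ρ ^ 2))).add
      ((h 1 2).const_mul (-1 / σ₂ ^ 2 / (1 - ρ ^ 2)))))).congr
    (Eventually.of_forall fun p => ?_)
  simp only [derivSndMulBinormalPDF, Pi.add_apply]
  ring

theorem integrable_derivSndMulBinormalPDF_snd (hσ₁ : 0 < σ₁) (hσ₂ : 0 < σ₂)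
    (hρ : ρ ∈ Ioo (-1 : ℝ) 1) (u₁ : ℝ) :
    Integrable (derivSndMulBinormalPDF μ₁ μ₂ σ₁ σ₂ ρ u₁) := by
  have h := integrable_pow_mul_binormalPDF_snd (μ₁ := μ₁) (μ₂ := μ₂) hσ₁ hσ₂ hρ
  refine (((h 0 u₁).const_mul u₁).add
    (((h 1 u₁).const_mul (u₁ * (ρ * (u₁ - μ₁) / (σ₁ * σ₂) + μ₂ / σ₂ ^ 2) / (1 - ρ ^ 2))).add
      ((h 2 u₁).const_mul (-u₁ / σ₂ ^ 2 / (1 - ρ ^ 2))))).congr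
    (Eventually.of_forall fun u₂ => ?_)
  simp only [derivSndMulBinormalPDF, Pi.add_apply]
  ring

theorem setIntegral_derivSndMulBinormalPDF (hσ₁ : 0 < σ₁) (hσ₂ : 0 < σ₂)
    (hρ : ρ ∈ Ioo (-1 : ℝ) 1) :
    ∫ p in Ioi (0 : ℝ) ×ˢ Ioi (0 : ℝ), derivSndMulBinormalPDF μ₁ μ₂ σ₁ σ₂ ρ p.1 p.2 = 0 :=
  setIntegral_Ioi_prod_Ioi_eq_zero_of_hasDerivAt_snd
    (F := fun u₁ u₂ => u₁ * u₂ * binormalPDF μ₁ μ₂ σ₁ σ₂ ρ u₁ u₂) (by simp)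
    (fun u₁ _ u₂ _ => hasDerivAt_mul_binormalPDF_snd μ₁ μ₂ σ₁ σ₂ ρ u₁ u₂)
    (fun u₁ _ => by
      simpa [mul_assoc] using
        ((integrable_pow_mul_binormalPDF_snd hσ₁ hσ₂ hρ 1 u₁).const_mul u₁).integrableOn)
    (fun u₁ _ => (integrable_derivSndMulBinormalPDF_snd hσ₁ hσ₂ hρ u₁).integrableOn)
    (integrable_derivSndMulBinormalPDF hσ₁ hσ₂ hρ).integrableOn

theorem integrable_derivSndMulBinormalPDF_swap (hσ₁ : 0 < σ₁) (hσ₂ : 0 < σ₂)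
    (hρ : ρ ∈ Ioo (-1 : ℝ) 1) :
    Integrable fun p : ℝ × ℝ => derivSndMulBinormalPDF μ₂ μ₁ σ₂ σ₁ ρ p.2 p.1 := by
  have h := (integrable_derivSndMulBinormalPDF (μ₁ := μ₂) (μ₂ := μ₁) hσ₂ hσ₁ hρ).swap
  rwa [← Measure.volume_eq_prod] at h

theorem setIntegral_derivSndMulBinormalPDF_swap (hσ₁ : 0 < σ₁) (hσ₂ : 0 < σ₂)
    (hρ : ρ ∈ Ioo (-1 : ℝ) 1) :
    ∫ p in Ioi (0 : ℝ) ×ˢ Ioi (0 : ℝ), derivSndMulBinormalPDF μ₂ μ₁ σ₂ σ₁ ρ p.2 p.1 = 0 := by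
  have h := setIntegral_prod_swap (μ := volume) (ν := volume) (Ioi (0 : ℝ)) (Ioi (0 : ℝ))
    fun p => derivSndMulBinormalPDF μ₂ μ₁ σ₂ σ₁ ρ p.1 p.2
  rw [← Measure.volume_eq_prod] at h
  exact h.trans (setIntegral_derivSndMulBinormalPDF hσ₂ hσ₁ hρ)

end Binormal

theorem panel_tobit_slope_effect_moment_general (n : ℕ) (xt xs β : Fin n → ℝ) (α : ℝ)
    (zt zs : ℝ)
    (σt σs ρ : ℝ) (hσt : 0 < σt) (hσs : 0 < σs) (hρ : ρ ∈ Set.Ioo (-1 : ℝ) 1)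
    (σts : ℝ) (hσts : σts = ρ * σt * σs) :
    ∫ p in Set.Ioi (0 : ℝ) ×ˢ Set.Ioi (0 : ℝ),
        (p.1 ^ 2 * zs ^ 2 * (p.2 * zt) - p.2 ^ 2 * zt ^ 2 * (p.1 * zs)
            - (p.1 * zs) * (p.2 * zt) * (∑ i, (xt i * zs - xs i * zt) * β i)
            + (p.1 * zs) * (zt ^ 2 * σs ^ 2 - zt * zs * σts)
            - (p.2 * zt) * (zs ^ 2 * σt ^ 2 - zt * zs * σts))
          * binormalPDF (∑ i, xt i * β i + zt * α) (∑ i, xs i * β i + zs * α)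
              σt σs ρ p.1 p.2 = 0 := by
  set m₁ := ∑ i, xt i * β i + zt * α
  set m₂ := ∑ i, xs i * β i + zs * α
  have hmean : ∑ i, (xt i * zs - xs i * zt) * β i = zs * m₁ - zt * m₂ := by
    calc ∑ i, (xt i * zs - xs i * zt) * β i = zs * ∑ i, xt i * β i - zt * ∑ i, xs i * β i := by
          rw [Finset.mul_sum, Finset.mul_sum, ← Finset.sum_sub_distrib]
          exact Finset.sum_congr rfl fun i _ => by ring
      _ = zs * m₁ - zt * m₂ := by simp only [m₁, m₂]; ring
  have hρ2 : 1 - ρ ^ 2 ≠ 0 := by nlinarith [hρ.1, hρ.2]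
  have hcomb : ∀ p : ℝ × ℝ, (p.1 ^ 2 * zs ^ 2 * (p.2 * zt) - p.2 ^ 2 * zt ^ 2 * (p.1 * zs)
            - (p.1 * zs) * (p.2 * zt) * (∑ i, (xt i * zs - xs i * zt) * β i)
            + (p.1 * zs) * (zt ^ 2 * σs ^ 2 - zt * zs * σts)
            - (p.2 * zt) * (zs ^ 2 * σt ^ 2 - zt * zs * σts)) * binormalPDF m₁ m₂ σt σs ρ p.1 p.2
      = zs * zt * (zt * σts - zs * σt ^ 2) * derivSndMulBinormalPDF m₂ m₁ σs σt ρ p.2 p.1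
        + zs * zt * (zt * σs ^ 2 - zs * σts) * derivSndMulBinormalPDF m₁ m₂ σt σs ρ p.1 p.2 := by
    intro p
    rw [hmean, hσts, derivSndMulBinormalPDF, derivSndMulBinormalPDF, binormalPDF_swap]
    field_simp
    ring
  simp_rw [hcomb]
  rw [integral_add ((integrable_derivSndMulBinormalPDF_swap hσt hσs hρ).integrableOn.const_mul _)
      ((integrable_derivSndMulBinormalPDF hσt hσs hρ).integrableOn.const_mul _),
    integral_const_mul, integral_const_mul, setIntegral_derivSndMulBinormalPDF_swap hσt hσs hρ,
    setIntegral_derivSndMulBinormalPDF hσt hσs hρ, mul_zero, mul_zero, add_zero]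

/-- Moment condition (Estm-sl) for the panel Tobit model with a fixed effect in the slopes:
with `(U_t, U_s)` bivariate normal with means `x_t'β + z_t α`, `x_s'β + z_s α`, standard
deviations `σ_t, σ_s`, and correlation `ρ` (covariance `σ_{t,s} = ρσ_tσ_s`), `z_t, z_s > 0`,
`E[(U_t²z_s²U_s z_t − U_s²z_t²U_t z_s − U_t z_s U_s z_t (x_t z_s − x_s z_t)'β
   + U_t z_s (z_t²σ_s² − z_t z_s σ_{t,s}) − U_s z_t (z_s²σ_t² − z_t z_s σ_{t,s}))·1{U_t>0,U_s>0}] = 0`. -/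
theorem panel_tobit_slope_effect_moment (n : ℕ) (hn : 1 ≤ n) (xt xs β : Fin n → ℝ) (α : ℝ)
    (zt zs : ℝ) (hzt : 0 < zt) (hzs : 0 < zs)
    (σt σs ρ : ℝ) (hσt : 0 < σt) (hσs : 0 < σs) (hρ : ρ ∈ Set.Ioo (-1 : ℝ) 1)
    (σts : ℝ) (hσts : σts = ρ * σt * σs) :
    ∫ p in Set.Ioi (0 : ℝ) ×ˢ Set.Ioi (0 : ℝ),
        (p.1 ^ 2 * zs ^ 2 * (p.2 * zt) - p.2 ^ 2 * zt ^ 2 * (p.1 * zs)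
            - (p.1 * zs) * (p.2 * zt) * (∑ i, (xt i * zs - xs i * zt) * β i)
            + (p.1 * zs) * (zt ^ 2 * σs ^ 2 - zt * zs * σts)
            - (p.2 * zt) * (zs ^ 2 * σt ^ 2 - zt * zs * σts))
          * binormalPDF (∑ i, xt i * β i + zt * α) (∑ i, xs i * β i + zs * α)
              σt σs ρ p.1 p.2 = 0 :=
  panel_tobit_slope_effect_moment_general n xt xs β α zt zs σt σs ρ hσt hσs hρ σts hσts
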